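/- arXiv:2506.16736 — 2 statements merged into one kernel-verified Lean document; each statement's English description precedes it below -/
import Mathlib

section
/- Let A = [[a,b],[c,d]] ∈ ℝ^{2×2} satisfy det A = ad − bc = 0 and a, d > max{0, b, c}, and set ρ₁ = (d−c)/(a−b), ρ₂ = (d−b)/(a−c) and a_max = max of the absolute values of the entries of A. Let {(y₁ᵗ, y₂ᵗ)} be the dual payoff vectors of any run of Optimistic Fictitious Play on A (any initialization x₁⁰, x₂⁰ ∈ Δ₂ and any tiebreaking rule). Then for every T, Ψ(y₁^{T+1}, y₂^{T+1}) ≤ 8·a_max·(1 + ρ₁ + ρ₂)². -/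
open Matrix

/-- A coordinate vector `x` is a standard basis vector maximizing `⟨·, v⟩`
over all standard basis vectors. -/
def IsVertexArgmax {m : ℕ} (x v : Fin m → ℝ) : Prop :=
  ∃ i : Fin m, x = Pi.single i 1 ∧
    ∀ j : Fin m, (Pi.single j 1 : Fin m → ℝ) ⬝ᵥ v ≤ x ⬝ᵥ v

/-- Optimistic Fictitious Play. -/
def IsOFPRun {m n : ℕ} (A : Matrix (Fin m) (Fin n) ℝ)
    (x₁ : ℕ → Fin m → ℝ) (x₂ : ℕ → Fin n → ℝ)
    (y₁ : ℕ → Fin m → ℝ) (y₂ : ℕ → Fin n → ℝ) : Prop :=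
  y₁ 0 = 0 ∧ y₂ 0 = 0 ∧
  x₁ 0 ∈ stdSimplex ℝ (Fin m) ∧ x₂ 0 ∈ stdSimplex ℝ (Fin n) ∧
  (∀ t : ℕ, y₁ (t + 1) = y₁ t + A.mulVec (x₂ t)) ∧
  (∀ t : ℕ, y₂ (t + 1) = y₂ t - Aᵀ.mulVec (x₁ t)) ∧
  (∀ t : ℕ, IsVertexArgmax (x₁ (t + 1)) (y₁ (t + 1) + A.mulVec (x₂ t))) ∧
  (∀ t : ℕ, IsVertexArgmax (x₂ (t + 1)) (y₂ (t + 1) - Aᵀ.mulVec (x₁ t)))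

/-- The energy function `Ψ(y₁, y₂) = max_{(x₁,x₂) ∈ Δ_m × Δ_n} (⟨x₁,y₁⟩ + ⟨x₂,y₂⟩)`. -/
noncomputable def energy {m n : ℕ} (y₁ : Fin m → ℝ) (y₂ : Fin n → ℝ) : ℝ :=
  ⨆ p : ↥(stdSimplex ℝ (Fin m)) × ↥(stdSimplex ℝ (Fin n)),
    (p.1 : Fin m → ℝ) ⬝ᵥ y₁ + (p.2 : Fin n → ℝ) ⬝ᵥ y₂

/-!
The matrix factors as `a • vecMulVec ![1, -ρ₁] ![1, -ρ₂]`, so the dual vectors stay on the rays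
`y₁ = a u (1, -ρ₁)`, `y₂ = a w (1, -ρ₂)`, on which `Ψ = a (max (u, -ρ₁ u) + max (w, -ρ₂ w))`, and
each player picks its pure strategy by the sign of its optimistic prediction of `u` resp. `w`.
In the `(u, w)`-plane the run turns clockwise through the quadrants. A step whose choices fit the
quadrant of the new point does not increase the energy; the prediction can only be wrong next to an
axis crossing, where the choices of the previous step bound the energy by `2 (1 + ρ₁) (1 + ρ₂)`.
So every step ends with energy at most the maximum of the previous energy and that bound.
-/

open Finset

lemma smul_vecMulVec_mulVec {R m n : Type*} [CommSemiring R] [Fintype n] (a : R) (e : m → R)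
    (f x : n → R) : (a • vecMulVec e f) *ᵥ x = (a * (f ⬝ᵥ x)) • e := by
  rw [smul_mulVec, vecMulVec_mulVec, op_smul_eq_smul, smul_smul]

section
variable {m n : ℕ} {x₁ : ℕ → Fin m → ℝ} {x₂ : ℕ → Fin n → ℝ} {y₁ : ℕ → Fin m → ℝ}
  {y₂ : ℕ → Fin n → ℝ}

theorem IsOFPRun.eq_smul_of_smul_vecMulVec {a : ℝ} {e : Fin m → ℝ} {f : Fin n → ℝ}
    (h : IsOFPRun (a • vecMulVec e f) x₁ x₂ y₁ y₂) (t : ℕ) :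
    y₁ t = (a * ∑ i ∈ range t, f ⬝ᵥ x₂ i) • e ∧ y₂ t = (a * -∑ i ∈ range t, e ⬝ᵥ x₁ i) • f := by
  obtain ⟨hy₁, hy₂, -, -, hy₁_succ, hy₂_succ, -, -⟩ := h
  induction t with
  | zero => simp [hy₁, hy₂]
  | succ t ih =>
    rw [hy₁_succ, hy₂_succ, ih.1, ih.2, transpose_smul, transpose_vecMulVec,
      smul_vecMulVec_mulVec, smul_vecMulVec_mulVec, sum_range_succ, sum_range_succ]
    constructor <;> module

lemma IsVertexArgmax.mem_stdSimplex {x v : Fin m → ℝ} (h : IsVertexArgmax x v) :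
    x ∈ stdSimplex ℝ (Fin m) := by
  obtain ⟨i, rfl, -⟩ := h
  exact single_mem_stdSimplex ℝ i

lemma IsOFPRun.mem_stdSimplex {A : Matrix (Fin m) (Fin n) ℝ} (h : IsOFPRun A x₁ x₂ y₁ y₂)
    (t : ℕ) : x₁ t ∈ stdSimplex ℝ (Fin m) ∧ x₂ t ∈ stdSimplex ℝ (Fin n) := by
  obtain ⟨-, -, hx₁, hx₂, -, -, hx₁_succ, hx₂_succ⟩ := h
  cases t with
  | zero => exact ⟨hx₁, hx₂⟩
  | succ t => exact ⟨(hx₁_succ t).mem_stdSimplex, (hx₂_succ t).mem_stdSimplex⟩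

end

lemma dotProduct_le_of_mem_stdSimplex {ι : Type*} [Fintype ι] {x y : ι → ℝ} {M : ℝ}
    (hx : x ∈ stdSimplex ℝ ι) (hy : ∀ i, y i ≤ M) : x ⬝ᵥ y ≤ M :=
  calc x ⬝ᵥ y = ∑ i, x i * y i := rfl
    _ ≤ ∑ i, x i * M := sum_le_sum fun i _ ↦ mul_le_mul_of_nonneg_left (hy i) (hx.1 i)
    _ = M := by rw [← sum_mul, hx.2, one_mul]

lemma energy_le_of_forall_le {m n : ℕ} [NeZero m] [NeZero n] {y₁ : Fin m → ℝ} {y₂ : Fin n → ℝ}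
    {M₁ M₂ : ℝ} (hy₁ : ∀ i, y₁ i ≤ M₁) (hy₂ : ∀ j, y₂ j ≤ M₂) : energy y₁ y₂ ≤ M₁ + M₂ :=
  ciSup_le fun p ↦ add_le_add (dotProduct_le_of_mem_stdSimplex p.1.2 hy₁)
    (dotProduct_le_of_mem_stdSimplex p.2.2 hy₂)

/-- The two pure strategies are encoded by their payoff multipliers `1` and `-r`: the reply `x` to
the signal `s` maximizes `x * s`. -/
def IsBestReply (r s x : ℝ) : Prop := (x = 1 ∧ 0 ≤ s) ∨ (x = -r ∧ s ≤ 0)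

def scalarEnergy (r s : ℝ) : ℝ := max s (-(r * s))

section
variable {r s : ℝ}

lemma le_scalarEnergy : s ≤ scalarEnergy r s := le_max_left _ _

lemma neg_mul_le_scalarEnergy : -(r * s) ≤ scalarEnergy r s := le_max_right _ _

lemma scalarEnergy_of_nonneg (hr : 0 ≤ r) (hs : 0 ≤ s) : scalarEnergy r s = s :=
  max_eq_left (by nlinarith)

lemma scalarEnergy_of_nonpos (hr : 0 ≤ r) (hs : s ≤ 0) : scalarEnergy r s = -(r * s) :=
  max_eq_right (by nlinarith)

lemma IsBestReply.mem_Icc {x : ℝ} (hr : 0 ≤ r) (h : IsBestReply r s x) : x ∈ Set.Icc (-r) 1 := by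
  rcases h with ⟨rfl, -⟩ | ⟨rfl, -⟩ <;> constructor <;> linarith

end

/-- `(u, w)` is reached by the step `(p₁, -q₁)`, which followed the step `(p₀, -q₀)`. -/
theorem scalarEnergy_step {ρ₁ ρ₂ u w p₀ q₀ p₁ q₁ p₂ q₂ : ℝ} (hρ₁ : 0 < ρ₁) (hρ₂ : 0 < ρ₂)
    (hp₀ : p₀ ∈ Set.Icc (-ρ₂) 1) (hq₀ : q₀ ∈ Set.Icc (-ρ₁) 1)
    (hq₁ : IsBestReply ρ₁ (u - p₁ + p₀) q₁) (hp₁ : IsBestReply ρ₂ (w + q₁ - q₀) p₁)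
    (hq₂ : IsBestReply ρ₁ (u + p₁) q₂) (hp₂ : IsBestReply ρ₂ (w - q₁) p₂) :
    scalarEnergy ρ₁ (u + p₂) + scalarEnergy ρ₂ (w - q₂) ≤
      max (scalarEnergy ρ₁ u + scalarEnergy ρ₂ w) (2 * (1 + ρ₁) * (1 + ρ₂)) := by
  obtain ⟨hp₀l, hp₀u⟩ := hp₀
  obtain ⟨hq₀l, hq₀u⟩ := hq₀
  obtain ⟨hp₁l, hp₁u⟩ := hp₁.mem_Icc hρ₂.le
  obtain ⟨hq₁l, hq₁u⟩ := hq₁.mem_Icc hρ₁.le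
  have hu₁ := le_scalarEnergy (r := ρ₁) (s := u)
  have hu₂ := neg_mul_le_scalarEnergy (r := ρ₁) (s := u)
  have hw₁ := le_scalarEnergy (r := ρ₂) (s := w)
  have hw₂ := neg_mul_le_scalarEnergy (r := ρ₂) (s := w)
  rcases hp₂ with ⟨rfl, hw⟩ | ⟨rfl, hw⟩ <;> rcases hq₂ with ⟨rfl, hu⟩ | ⟨rfl, hu⟩
  · rw [scalarEnergy_of_nonneg hρ₁.le (by linarith)]
    rcases hq₁ with ⟨rfl, -⟩ | ⟨rfl, hq₁⟩
    · rw [scalarEnergy_of_nonneg hρ₂.le (by linarith)]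
      exact le_max_of_le_left (by linarith)
    · rw [scalarEnergy, ← max_add_add_left]
      exact max_le_max (by linarith) (by nlinarith)
  · rw [scalarEnergy_of_nonneg hρ₂.le (by linarith)]
    by_cases hu' : u + 1 ≤ 0
    · rw [scalarEnergy_of_nonpos hρ₁.le hu']
      exact le_max_of_le_left (by linarith)
    · rcases hp₁ with ⟨rfl, -⟩ | ⟨rfl, hp₁⟩
      · exact absurd hu (by linarith)
      · rw [scalarEnergy_of_nonneg hρ₁.le (by linarith)]
        exact le_max_of_le_right (by nlinarith)
  · rw [← sub_eq_add_neg, scalarEnergy_of_nonpos hρ₂.le (by linarith)]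
    by_cases hu' : 0 ≤ u - ρ₂
    · rw [scalarEnergy_of_nonneg hρ₁.le hu']
      exact le_max_of_le_left (by linarith)
    · rcases hp₁ with ⟨rfl, hp₁⟩ | ⟨rfl, -⟩
      · rw [scalarEnergy_of_nonpos hρ₁.le (by linarith)]
        exact le_max_of_le_right (by nlinarith)
      · exact absurd hu (by linarith)
  · rw [scalarEnergy_of_nonpos hρ₁.le (by linarith)]
    by_cases hw' : w + ρ₁ ≤ 0
    · rw [sub_neg_eq_add, scalarEnergy_of_nonpos hρ₂.le hw']
      exact le_max_of_le_left (by linarith)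
    · rcases hq₁ with ⟨rfl, hq₁⟩ | ⟨rfl, -⟩
      · rw [scalarEnergy_of_nonneg hρ₂.le (by linarith)]
        exact le_max_of_le_right (by nlinarith)
      · exact absurd hw (by linarith)

/-- Optimistic fictitious play on `a • vecMulVec ![1, -ρ₁] ![1, -ρ₂]` in the coordinates
`y₁ t = (a * u t) • ![1, -ρ₁]`, `y₂ t = (a * w t) • ![1, -ρ₂]`, `p t = ![1, -ρ₂] ⬝ᵥ x₂ t` and
`q t = ![1, -ρ₁] ⬝ᵥ x₁ t`. -/
structure IsScalarOFPRun (ρ₁ ρ₂ : ℝ) (u w p q : ℕ → ℝ) : Prop where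
  u_zero : u 0 = 0
  w_zero : w 0 = 0
  u_succ : ∀ t, u (t + 1) = u t + p t
  w_succ : ∀ t, w (t + 1) = w t - q t
  p_mem : ∀ t, p t ∈ Set.Icc (-ρ₂) 1
  q_mem : ∀ t, q t ∈ Set.Icc (-ρ₁) 1
  p_reply : ∀ t, IsBestReply ρ₂ (w (t + 1) - q t) (p (t + 1))
  q_reply : ∀ t, IsBestReply ρ₁ (u (t + 1) + p t) (q (t + 1))

lemma scalarEnergy_add_le_of_mem_Icc {ρ₁ ρ₂ u w : ℝ} (hρ₁ : 0 < ρ₁) (hρ₂ : 0 < ρ₂)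
    (hu : u ∈ Set.Icc (-(2 * ρ₂)) 2) (hw : w ∈ Set.Icc (-2) (2 * ρ₁)) :
    scalarEnergy ρ₁ u + scalarEnergy ρ₂ w ≤ 2 * (1 + ρ₁) * (1 + ρ₂) := by
  obtain ⟨hul, huu⟩ := hu
  obtain ⟨hwl, hwu⟩ := hw
  have hu' : scalarEnergy ρ₁ u ≤ 2 + 2 * ρ₁ * ρ₂ := max_le (by nlinarith) (by nlinarith)
  have hw' : scalarEnergy ρ₂ w ≤ 2 * ρ₁ + 2 * ρ₂ := max_le (by nlinarith) (by nlinarith)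
  linarith

theorem IsScalarOFPRun.scalarEnergy_add_le {ρ₁ ρ₂ : ℝ} {u w p q : ℕ → ℝ}
    (h : IsScalarOFPRun ρ₁ ρ₂ u w p q) (hρ₁ : 0 < ρ₁) (hρ₂ : 0 < ρ₂) (T : ℕ) :
    scalarEnergy ρ₁ (u (T + 1)) + scalarEnergy ρ₂ (w (T + 1)) ≤ 2 * (1 + ρ₁) * (1 + ρ₂) := by
  induction T using Nat.twoStepInduction with
  | zero | one =>
    obtain ⟨hp₀l, hp₀u⟩ := h.p_mem 0
    obtain ⟨hp₁l, hp₁u⟩ := h.p_mem 1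
    obtain ⟨hq₀l, hq₀u⟩ := h.q_mem 0
    obtain ⟨hq₁l, hq₁u⟩ := h.q_mem 1
    simp only [h.u_succ, h.w_succ, h.u_zero, h.w_zero]
    apply scalarEnergy_add_le_of_mem_Icc hρ₁ hρ₂ <;> constructor <;> linarith
  | more T _ ih =>
    rw [h.u_succ (T + 2), h.w_succ (T + 2)]
    refine (scalarEnergy_step hρ₁ hρ₂ (h.p_mem T) (h.q_mem T) ?_ ?_ (h.q_reply (T + 1))
      (h.p_reply (T + 1))).trans (max_le ih le_rfl)
    · convert h.q_reply T using 2
      rw [h.u_succ (T + 1)]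
      ring
    · convert h.p_reply T using 2
      rw [h.w_succ (T + 1)]
      ring

lemma isBestReply_mul_left_iff {r s x a : ℝ} (ha : 0 < a) :
    IsBestReply r (a * s) x ↔ IsBestReply r s x := by
  rw [IsBestReply, IsBestReply, mul_nonneg_iff_of_pos_left ha, ← not_lt (b := a * s),
    mul_pos_iff_of_pos_left ha, not_lt]

lemma scalarEnergy_mul {r s a : ℝ} (ha : 0 ≤ a) :
    scalarEnergy r (a * s) = a * scalarEnergy r s := by
  rw [scalarEnergy, scalarEnergy, mul_max_of_nonneg _ _ ha, mul_neg, mul_left_comm]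

lemma dotProduct_mem_Icc_of_mem_stdSimplex {r : ℝ} {x : Fin 2 → ℝ} (hr : 0 ≤ r)
    (hx : x ∈ stdSimplex ℝ (Fin 2)) : ![1, -r] ⬝ᵥ x ∈ Set.Icc (-r) 1 := by
  have hsum : x 0 + x 1 = 1 := by simpa [Fin.sum_univ_two] using hx.2
  have h₀ := hx.1 0
  have h₁ := hx.1 1
  simp only [dotProduct, Fin.sum_univ_two, cons_val_zero, cons_val_one]
  constructor <;> nlinarith

lemma IsVertexArgmax.isBestReply {r c : ℝ} {x : Fin 2 → ℝ} (hr : 0 < r)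
    (h : IsVertexArgmax x (c • ![1, -r])) : IsBestReply r c (![1, -r] ⬝ᵥ x) := by
  obtain ⟨i, rfl, hi⟩ := h
  have h₀ := hi 0
  have h₁ := hi 1
  simp only [single_dotProduct, dotProduct_single, one_mul, mul_one, Pi.smul_apply, smul_eq_mul]
    at h₀ h₁ ⊢
  fin_cases i <;>
    simp only [Fin.zero_eta, Fin.mk_one, cons_val_zero, cons_val_one, cons_val_fin_one, mul_neg]
      at h₀ h₁ ⊢
  · exact Or.inl ⟨rfl, by nlinarith⟩
  · exact Or.inr ⟨rfl, by nlinarith⟩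

lemma energy_smul_le {ρ₁ ρ₂ c₁ c₂ : ℝ} :
    energy (c₁ • ![1, -ρ₁]) (c₂ • ![1, -ρ₂]) ≤ scalarEnergy ρ₁ c₁ + scalarEnergy ρ₂ c₂ := by
  apply energy_le_of_forall_le <;> intro i <;> fin_cases i <;> simp [scalarEnergy, mul_comm]

theorem IsOFPRun.exists_isScalarOFPRun {a ρ₁ ρ₂ : ℝ} {x₁ x₂ y₁ y₂ : ℕ → Fin 2 → ℝ}
    (ha : 0 < a) (hρ₁ : 0 < ρ₁) (hρ₂ : 0 < ρ₂)
    (h : IsOFPRun (a • vecMulVec ![1, -ρ₁] ![1, -ρ₂]) x₁ x₂ y₁ y₂) :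
    ∃ u w p q : ℕ → ℝ, IsScalarOFPRun ρ₁ ρ₂ u w p q ∧
      ∀ t, y₁ t = (a * u t) • ![1, -ρ₁] ∧ y₂ t = (a * w t) • ![1, -ρ₂] := by
  have hy := h.eq_smul_of_smul_vecMulVec
  have hx := h.mem_stdSimplex
  obtain ⟨-, -, -, -, -, -, hx₁_succ, hx₂_succ⟩ := h
  refine ⟨_, _, fun t ↦ ![1, -ρ₂] ⬝ᵥ x₂ t, fun t ↦ ![1, -ρ₁] ⬝ᵥ x₁ t,
    ⟨by simp, by simp, fun t ↦ sum_range_succ _ t,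
      fun t ↦ by rw [sum_range_succ, neg_add, sub_eq_add_neg],
      fun t ↦ dotProduct_mem_Icc_of_mem_stdSimplex hρ₂.le (hx t).2,
      fun t ↦ dotProduct_mem_Icc_of_mem_stdSimplex hρ₁.le (hx t).1, fun t ↦ ?_, fun t ↦ ?_⟩, hy⟩
  · have := hx₂_succ t
    rw [(hy (t + 1)).2, transpose_smul, transpose_vecMulVec, smul_vecMulVec_mulVec, ← sub_smul,
      ← mul_sub] at this
    exact (isBestReply_mul_left_iff ha).1 (this.isBestReply hρ₂)
  · have := hx₁_succ t
    rw [(hy (t + 1)).1, smul_vecMulVec_mulVec, ← add_smul, ← mul_add] at this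
    exact (isBestReply_mul_left_iff ha).1 (this.isBestReply hρ₁)

lemma matrix_eq_smul_vecMulVec_of_det_eq_zero {a b c d : ℝ} (hdet : a * d - b * c = 0)
    (hab : a ≠ b) (hac : a ≠ c) :
    !![a, b; c, d] = a • vecMulVec ![1, -((d - c) / (a - b))] ![1, -((d - b) / (a - c))] := by
  have hab' : a - b ≠ 0 := sub_ne_zero.2 hab
  have hac' : a - c ≠ 0 := sub_ne_zero.2 hac
  ext i j
  fin_cases i <;> fin_cases j <;> simp <;> field_simp
  · linear_combination hdet
  · linear_combination hdet
  · linear_combination (a - d) * hdet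

lemma off_diag_neg_of_det_eq_zero {a b c d : ℝ} (hdet : a * d - b * c = 0)
    (ha : a > max 0 (max b c)) (hd : d > max 0 (max b c)) : b < 0 ∧ c < 0 := by
  simp only [gt_iff_lt, max_lt_iff] at ha hd
  constructor <;> nlinarith

/-- bounded energy of the dual iterates of Optimistic FP on a
2×2 matrix `A = [[a,b],[c,d]]` with `det A = 0` and `a, d > max{0, b, c}`. -/
theorem ofp_energy_bound_2x2
    (a b c d : ℝ)
    (hdet : a * d - b * c = 0)
    (ha : a > max 0 (max b c)) (hd : d > max 0 (max b c))
    (ρ₁ ρ₂ amax : ℝ)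
    (hρ₁ : ρ₁ = (d - c) / (a - b)) (hρ₂ : ρ₂ = (d - b) / (a - c))
    (hamax : amax = max (max |a| |b|) (max |c| |d|))
    (x₁ x₂ y₁ y₂ : ℕ → Fin 2 → ℝ)
    (hrun : IsOFPRun !![a, b; c, d] x₁ x₂ y₁ y₂) :
    ∀ T : ℕ, energy (y₁ (T + 1)) (y₂ (T + 1)) ≤ 8 * amax * (1 + ρ₁ + ρ₂) ^ 2 := by
  intro T
  obtain ⟨hb, hc⟩ := off_diag_neg_of_det_eq_zero hdet ha hd
  have ha₀ : 0 < a := (le_max_left _ _).trans_lt ha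
  have hd₀ : 0 < d := (le_max_left _ _).trans_lt hd
  have hρ₁₀ : 0 < ρ₁ := hρ₁ ▸ div_pos (by linarith) (by linarith)
  have hρ₂₀ : 0 < ρ₂ := hρ₂ ▸ div_pos (by linarith) (by linarith)
  rw [matrix_eq_smul_vecMulVec_of_det_eq_zero hdet (by linarith) (by linarith), ← hρ₁, ← hρ₂]
    at hrun
  obtain ⟨u, w, p, q, hscalar, hy⟩ := hrun.exists_isScalarOFPRun ha₀ hρ₁₀ hρ₂₀
  have ha_le : a ≤ amax := hamax ▸ (le_abs_self a).trans ((le_max_left _ _).trans (le_max_left _ _))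
  rw [(hy _).1, (hy _).2]
  calc energy _ _ ≤ scalarEnergy ρ₁ (a * u (T + 1)) + scalarEnergy ρ₂ (a * w (T + 1)) :=
        energy_smul_le
    _ = a * (scalarEnergy ρ₁ (u (T + 1)) + scalarEnergy ρ₂ (w (T + 1))) := by
        rw [scalarEnergy_mul ha₀.le, scalarEnergy_mul ha₀.le, mul_add]
    _ ≤ a * (2 * (1 + ρ₁) * (1 + ρ₂)) :=
        mul_le_mul_of_nonneg_left (hscalar.scalarEnergy_add_le hρ₁₀ hρ₂₀ T) ha₀.le
    _ ≤ 8 * a * (1 + ρ₁ + ρ₂) ^ 2 := by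
        nlinarith [mul_pos ha₀ (mul_pos hρ₁₀ hρ₂₀), mul_pos ha₀ hρ₁₀, mul_pos ha₀ hρ₂₀,
          mul_nonneg ha₀.le (sq_nonneg ρ₁), mul_nonneg ha₀.le (sq_nonneg ρ₂)]
    _ ≤ 8 * amax * (1 + ρ₁ + ρ₂) ^ 2 := by gcongr
end

section
/- Let A ∈ ℝ^{m×n}, let J = [[0, A], [−Aᵀ, 0]] ∈ ℝ^{(m+n)×(m+n)}, let y ∈ ℝ^{m+n}, let x ∈ Δ_m × Δ_n ⊂ ℝ^{m+n}, and set y' = y + Jx. If x attains the maximum in Ψ(y'), i.e., ⟨x, y'⟩ = Ψ(y'), then Ψ(y') ≤ Ψ(y). (This is the key one-step energy non-increase property of Optimistic Fictitious Play when the maximizer at the predicted dual vector coincides with the maximizer at the true next dual vector.) -/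
open Matrix

/-- This is `⟨x, y + Jx⟩ = ⟨x, y⟩`, i.e. `⟨x, Jx⟩ = 0` for the skew-symmetric `J`. -/
theorem dotProduct_add_dotProduct_skew_shift {R ι κ : Type*} [CommRing R] [Fintype ι]
    [Fintype κ] (A : Matrix ι κ R) (x₁ y₁ : ι → R) (x₂ y₂ : κ → R) :
    x₁ ⬝ᵥ (y₁ + A *ᵥ x₂) + x₂ ⬝ᵥ (y₂ - Aᵀ *ᵥ x₁) = x₁ ⬝ᵥ y₁ + x₂ ⬝ᵥ y₂ := by
  have hskew : x₂ ⬝ᵥ Aᵀ *ᵥ x₁ = x₁ ⬝ᵥ A *ᵥ x₂ := by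
    rw [mulVec_transpose, dotProduct_comm, dotProduct_mulVec]
  rw [dotProduct_add, dotProduct_sub, hskew]
  ring

theorem le_energy {m n : ℕ} {x₁ : Fin m → ℝ} {x₂ : Fin n → ℝ}
    (hx₁ : x₁ ∈ stdSimplex ℝ (Fin m)) (hx₂ : x₂ ∈ stdSimplex ℝ (Fin n))
    (y₁ : Fin m → ℝ) (y₂ : Fin n → ℝ) :
    x₁ ⬝ᵥ y₁ + x₂ ⬝ᵥ y₂ ≤ energy y₁ y₂ := by
  have : CompactSpace (stdSimplex ℝ (Fin m)) :=
    isCompact_iff_compactSpace.mp (isCompact_stdSimplex _ _)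
  have : CompactSpace (stdSimplex ℝ (Fin n)) :=
    isCompact_iff_compactSpace.mp (isCompact_stdSimplex _ _)
  have hcont : Continuous fun p : stdSimplex ℝ (Fin m) × stdSimplex ℝ (Fin n) =>
      (p.1 : Fin m → ℝ) ⬝ᵥ y₁ + (p.2 : Fin n → ℝ) ⬝ᵥ y₂ := by
    fun_prop
  exact le_ciSup (isCompact_range hcont).bddAbove (⟨x₁, hx₁⟩, ⟨x₂, hx₂⟩)

/-- with `y' = y + Jx`, if `x ∈ Δ_m × Δ_n` attains the maximum in
`Ψ(y')`, i.e. `⟨x, y'⟩ = Ψ(y')`, then `Ψ(y') ≤ Ψ(y)`. -/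
theorem ofp_one_step_energy_nonincrease
    {m n : ℕ} (A : Matrix (Fin m) (Fin n) ℝ)
    (y₁ : Fin m → ℝ) (y₂ : Fin n → ℝ) (x₁ : Fin m → ℝ) (x₂ : Fin n → ℝ)
    (hx₁ : x₁ ∈ stdSimplex ℝ (Fin m)) (hx₂ : x₂ ∈ stdSimplex ℝ (Fin n))
    (y₁' : Fin m → ℝ) (y₂' : Fin n → ℝ)
    (hy₁' : y₁' = y₁ + A.mulVec x₂) (hy₂' : y₂' = y₂ - Aᵀ.mulVec x₁)
    (hmax : x₁ ⬝ᵥ y₁' + x₂ ⬝ᵥ y₂' = energy y₁' y₂') :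
    energy y₁' y₂' ≤ energy y₁ y₂ := by
  rw [← hmax, hy₁', hy₂', dotProduct_add_dotProduct_skew_shift]
  exact le_energy hx₁ hx₂ y₁ y₂
end
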